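/- arXiv:math/0611695 — 3 statements merged into one kernel-verified Lean document; each statement's English description precedes it below -/
import Mathlib

section
/- Let W_k (k ∈ Z) be i.i.d. elements of a Polish space W, X_k = φ(W_k) i.i.d. real, non-arithmetic, with mean μ > 0 and finite variance, S_n = X_1 + ... + X_n. Given 0 < α < 1, set β = (1 − α²)/α. Then there is a constant K_1 = K_{1,α} such that Σ_{n=0}^{∞} P(W*_n ∈ B, a < S_n ≤ a + b) ≤ K_1 (1 + b) P(W*_0 ∈ B)^α for all measurable B in the product σ-algebra on W^Z and all 0 ≤ a, b < ∞, where W*_n = (..., W_{n−1}, W_n, W_{n+1}, ...). -/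
/-!
Read backwards from time `0`, the walk is `S'ₙ = X₀ + ⋯ + Xₙ₋₁` with `Xⱼ = φ(W₋ⱼ)`, and since
`W*ₙ` has the law of `W*₀` while `Sₙ` is `S'ₙ` computed from `W*ₙ`, the `n`-th term of the sum
equals `P(W*₀ ∈ B, a < S'ₙ ≤ a + b)`. By the strong law of large numbers there is `L = O(1 + b)`
such that, with probability at least `1/2`, the walk stays more than `b` above its value at time `t`
at all times after `t + L`; this event is independent of the past before `t`. Hence the event
`Hₖ` that `S'` visits `(a, a + b]` at `k + 1` times with mutual gaps larger than `L` has
`P(Hₖ) ≤ 2⁻ᵏ` (strong Markov property at the end of the first such chain), while the number of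
visits is at most `(L + 1) · #{k | Hₖ}`. With `E = {W*₀ ∈ B}` and
`P(E ∩ Hₖ) ≤ P(E)^α P(Hₖ)^(1-α)`, summing a geometric series gives the bound.
-/

open MeasureTheory ProbabilityTheory Filter Finset
open scoped ENNReal

def IsSepChain (L : ℕ) {k : ℕ} (c : Fin (k + 1) → ℕ) : Prop :=
  ∀ i j, i < j → c i + L < c j

lemma IsSepChain.le_last {L k : ℕ} {c : Fin (k + 1) → ℕ} (hc : IsSepChain L c) (i : Fin (k + 1)) :
    c i ≤ c (Fin.last k) := by
  rcases (Fin.le_last i).lt_or_eq with h | h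
  · exact (Nat.le_add_right _ _).trans (hc _ _ h).le
  · rw [h]

/-- The chain has `k + 1` points, so `k` counts its gaps. -/
def HasSepChainEndingAt (A : Set ℕ) (L k t : ℕ) : Prop :=
  ∃ c : Fin (k + 1) → ℕ, IsSepChain L c ∧ (∀ i, c i ∈ A) ∧ c (Fin.last k) = t

def HasSepChain (A : Set ℕ) (L k : ℕ) : Prop :=
  ∃ t, HasSepChainEndingAt A L k t

lemma HasSepChainEndingAt.mem {A : Set ℕ} {L k t : ℕ} (h : HasSepChainEndingAt A L k t) :
    t ∈ A := by
  obtain ⟨c, -, hA, rfl⟩ := h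
  exact hA _

lemma HasSepChain.exists_first_end {A : Set ℕ} {L k : ℕ} (h : HasSepChain A L (k + 1)) :
    ∃ t s, (HasSepChainEndingAt A L k t ∧ ∀ u < t, ¬ HasSepChainEndingAt A L k u) ∧
      s ∈ A ∧ t + L < s := by
  classical
  obtain ⟨-, c, hc, hA, -⟩ := h
  have hinit : HasSepChainEndingAt A L k (c (Fin.last k).castSucc) :=
    ⟨fun i => c i.castSucc, fun i j hij => hc _ _ (Fin.castSucc_lt_castSucc_iff.2 hij),
      fun i => hA _, rfl⟩
  have hex : ∃ t, HasSepChainEndingAt A L k t := ⟨_, hinit⟩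
  refine ⟨Nat.find hex, c (Fin.last (k + 1)), ⟨Nat.find_spec hex, fun u hu => Nat.find_min hex hu⟩,
    hA _, ?_⟩
  exact (Nat.add_le_add_right (Nat.find_min' hex hinit) L).trans_lt
    (hc _ _ (Fin.castSucc_lt_last _))

lemma encard_le_of_not_hasSepChain {A : Set ℕ} {L k : ℕ} (hA : ¬ HasSepChain A L k) :
    A.encard ≤ k * (L + 1) := by
  induction k generalizing A with
  | zero =>
    rw [Set.eq_empty_of_forall_notMem fun x hx => hA ⟨x, fun _ => x, fun i j hij => absurd hij
      (by simp [Fin.lt_def]), fun _ => hx, rfl⟩]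
    simp
  | succ k ih =>
    obtain rfl | hne := A.eq_empty_or_nonempty
    · simp
    set t₀ := sInf A
    set A' := {n ∈ A | t₀ + L < n}
    have hA' : ¬ HasSepChain A' L k := by
      rintro ⟨t, c, hc, hcA, hct⟩
      refine hA ⟨t, Fin.cons t₀ c, fun i j hij => ?_,
        Fin.cases (Nat.sInf_mem hne) fun i => (hcA i).1, by simpa using hct⟩
      induction j using Fin.cases with
      | zero => exact absurd hij (Fin.not_lt_zero _)
      | succ j =>
        induction i using Fin.cases with
        | zero => simpa using (hcA j).2
        | succ i => simpa using hc i j (Fin.succ_lt_succ_iff.1 hij)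
    have hsub : A ⊆ Set.Icc t₀ (t₀ + L) ∪ A' := fun n hn => by
      rcases le_or_gt n (t₀ + L) with h | h
      · exact Or.inl ⟨Nat.sInf_le hn, h⟩
      · exact Or.inr ⟨hn, h⟩
    calc A.encard ≤ (Set.Icc t₀ (t₀ + L)).encard + A'.encard :=
          (Set.encard_le_encard hsub).trans (Set.encard_union_le _ _)
      _ ≤ (L + 1) + k * (L + 1) := by
          gcongr
          · rw [← Finset.coe_Icc, Set.encard_coe_eq_coe_finsetCard, Nat.card_Icc]
            norm_cast
            omega
          · exact ih hA'
      _ = ↑(k + 1) * (L + 1) := by push_cast; ring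

lemma encard_le_mul_encard_hasSepChain (A : Set ℕ) (L : ℕ) :
    A.encard ≤ (L + 1) * {k | HasSepChain A L k}.encard := by
  classical
  by_cases hall : ∀ k, HasSepChain A L k
  · have : {k | HasSepChain A L k} = Set.univ := Set.eq_univ_of_forall hall
    simp [this, Set.infinite_univ]
  push Not at hall
  have hm : (Nat.find hall : ℕ∞) ≤ {k | HasSepChain A L k}.encard := by
    calc (Nat.find hall : ℕ∞) = (Set.Iio (Nat.find hall)).encard := by
          rw [← Finset.coe_range, Set.encard_coe_eq_coe_finsetCard, Finset.card_range]
      _ ≤ _ := Set.encard_le_encard fun k hk => not_not.1 (Nat.find_min hall hk)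
  calc A.encard ≤ Nat.find hall * (L + 1) :=
        encard_le_of_not_hasSepChain (Nat.find_spec hall)
    _ ≤ (L + 1) * {k | HasSepChain A L k}.encard := by rw [mul_comm]; gcongr

section ChainDecay

variable {Ω : Type*} {m0 : MeasurableSpace Ω} {F : ℕ → MeasurableSpace Ω} {V T : ℕ → Set Ω}
  {L : ℕ}

lemma measurableSet_hasSepChainEndingAt {t : ℕ}
    (hV : ∀ n ≤ t, MeasurableSet[F t] (V n)) {k u : ℕ} (hu : u ≤ t) :
    MeasurableSet[F t] {ω | HasSepChainEndingAt {n | ω ∈ V n} L k u} := by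
  have : {ω | HasSepChainEndingAt {n | ω ∈ V n} L k u} =
      ⋃ (c : Fin (k + 1) → ℕ) (_ : IsSepChain L c ∧ c (Fin.last k) = u),
        ⋂ i, V (c i) := by
    ext ω
    simp only [HasSepChainEndingAt, Set.mem_ofPred_eq, Set.mem_iUnion, Set.mem_iInter]
    exact ⟨fun ⟨c, hc, hA, hu⟩ => ⟨c, ⟨hc, hu⟩, hA⟩, fun ⟨c, ⟨hc, hu⟩, hA⟩ => ⟨c, hc, hA, hu⟩⟩
  rw [this]
  refine .iUnion fun c => .iUnion fun hc => .iInter fun i => hV _ ?_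
  exact (hc.1.le_last i).trans (hc.2 ▸ hu)

lemma measurableSet_hasSepChain (hV : ∀ n, MeasurableSet (V n)) (k : ℕ) :
    MeasurableSet {ω | HasSepChain {n | ω ∈ V n} L k} := by
  simp only [HasSepChain, Set.ofPred_exists]
  exact .iUnion fun u =>
    measurableSet_hasSepChainEndingAt (F := fun _ => m0) (fun n _ => hV n) le_rfl

variable {P : Measure Ω} {r : ℝ≥0∞}

/-- Think of `F t` as the information available at time `t`, of `V n` as a visit at time `n`, and
of `T t` as a return of the walk after time `t + L` to within the window of a visit at time `t`. -/
lemma measure_hasSepChain_succ_le (hF : ∀ t, F t ≤ m0)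
    (hV : ∀ n t, n ≤ t → MeasurableSet[F t] (V n))
    (hT : ∀ t s, MeasurableSet[F t] s → P (s ∩ T t) ≤ P s * r)
    (hVT : ∀ ω t s, ω ∈ V t → ω ∈ V s → t + L < s → ω ∈ T t) (k : ℕ) :
    P {ω | HasSepChain {n | ω ∈ V n} L (k + 1)} ≤
      P {ω | HasSepChain {n | ω ∈ V n} L k} * r := by
  set E : ℕ → Set Ω := fun u => {ω | HasSepChainEndingAt {n | ω ∈ V n} L k u}
  set M : ℕ → Set Ω := fun t => E t \ ⋃ u < t, E u
  have hM : ∀ t, MeasurableSet[F t] (M t) := fun t =>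
    (measurableSet_hasSepChainEndingAt (hV · t) le_rfl).diff
      (.iUnion fun u => .iUnion fun hu => measurableSet_hasSepChainEndingAt (hV · t) hu.le)
  have hM_disj : Pairwise (Function.onFun Disjoint M) := by
    intro t₁ t₂ hne
    wlog h : t₁ < t₂ generalizing t₁ t₂
    · exact (this hne.symm ((Ne.symm hne).lt_of_le (not_lt.1 h))).symm
    exact Set.disjoint_left.2 fun ω h₁ h₂ => h₂.2 (Set.mem_biUnion h h₁.1)
  have hcover : {ω | HasSepChain {n | ω ∈ V n} L (k + 1)} ⊆ ⋃ t, M t ∩ T t := by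
    intro ω hω
    obtain ⟨t, s, ⟨ht, hmin⟩, hs, hts⟩ := HasSepChain.exists_first_end hω
    refine Set.mem_iUnion.2 ⟨t, ⟨ht, ?_⟩, hVT ω t s ht.mem hs hts⟩
    simp only [Set.mem_iUnion, not_exists]
    exact fun u hu => hmin u hu
  have hM_sub : (⋃ t, M t) ⊆ {ω | HasSepChain {n | ω ∈ V n} L k} :=
    Set.iUnion_subset fun t _ hω => ⟨t, hω.1⟩
  calc P {ω | HasSepChain {n | ω ∈ V n} L (k + 1)} ≤ ∑' t, P (M t ∩ T t) :=
        (measure_mono hcover).trans (measure_iUnion_le _)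
    _ ≤ ∑' t, P (M t) * r := ENNReal.tsum_le_tsum fun t => hT t _ (hM t)
    _ = P (⋃ t, M t) * r := by
        rw [ENNReal.tsum_mul_right, measure_iUnion hM_disj fun t => hF t _ (hM t)]
    _ ≤ P {ω | HasSepChain {n | ω ∈ V n} L k} * r := by gcongr

lemma measure_hasSepChain_le [IsProbabilityMeasure P] (hF : ∀ t, F t ≤ m0)
    (hV : ∀ n t, n ≤ t → MeasurableSet[F t] (V n))
    (hT : ∀ t s, MeasurableSet[F t] s → P (s ∩ T t) ≤ P s * r)
    (hVT : ∀ ω t s, ω ∈ V t → ω ∈ V s → t + L < s → ω ∈ T t) (k : ℕ) :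
    P {ω | HasSepChain {n | ω ∈ V n} L k} ≤ r ^ k := by
  induction k with
  | zero => simpa using prob_le_one
  | succ k ih =>
    calc _ ≤ P {ω | HasSepChain {n | ω ∈ V n} L k} * r :=
          measure_hasSepChain_succ_le hF hV hT hVT k
      _ ≤ r ^ (k + 1) := by rw [pow_succ]; gcongr

end ChainDecay

lemma tsum_measure_le_mul_tsum_measure_hasSepChain {Ω : Type*} {m0 : MeasurableSpace Ω}
    (Q : Measure Ω) {V : ℕ → Set Ω}
    (hV : ∀ n, MeasurableSet (V n)) (L : ℕ) :
    ∑' n, Q (V n) ≤ (L + 1) * ∑' k, Q {ω | HasSepChain {n | ω ∈ V n} L k} := by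
  have hcount : ∀ (A : ℕ → Set Ω) ω, ∑' n, (A n).indicator 1 ω = ({n | ω ∈ A n}.encard : ℝ≥0∞) := by
    intro A ω
    rw [← ENNReal.tsum_set_one, _root_.tsum_subtype {n | ω ∈ A n} (fun _ => (1 : ℝ≥0∞))]
    rfl
  calc ∑' n, Q (V n) = ∫⁻ ω, ∑' n, (V n).indicator 1 ω ∂Q := by
        rw [lintegral_tsum fun n => (measurable_one.indicator (hV n)).aemeasurable]
        simp_rw [lintegral_indicator_one (hV _)]
    _ ≤ ∫⁻ ω, (L + 1) * ∑' k, {ω | HasSepChain {n | ω ∈ V n} L k}.indicator 1 ω ∂Q := by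
        refine lintegral_mono fun ω => ?_
        simp only [hcount]
        exact_mod_cast encard_le_mul_encard_hasSepChain _ L
    _ = (L + 1) * ∑' k, Q {ω | HasSepChain {n | ω ∈ V n} L k} := by
        have hm := measurableSet_hasSepChain (L := L) hV
        rw [lintegral_const_mul' _ _ (by simp),
          lintegral_tsum fun k => (measurable_one.indicator (hm k)).aemeasurable]
        simp_rw [lintegral_indicator_one (hm _)]

lemma MeasureTheory.measure_inter_le_rpow_mul_rpow {Ω : Type*} {m0 : MeasurableSpace Ω}
    (P : Measure Ω) (s t : Set Ω) {α : ℝ} (h0 : 0 ≤ α) (h1 : α ≤ 1) :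
    P (s ∩ t) ≤ P s ^ α * P t ^ (1 - α) := by
  calc P (s ∩ t) = P (s ∩ t) ^ α * P (s ∩ t) ^ (1 - α) := by
        rw [← ENNReal.rpow_add_of_nonneg _ _ h0 (sub_nonneg.2 h1), add_sub_cancel, ENNReal.rpow_one]
    _ ≤ P s ^ α * P t ^ (1 - α) := by
        gcongr
        exacts [Set.inter_subset_left, Set.inter_subset_right]

lemma ProbabilityTheory.iIndepFun.identDistrib_precomp {Ω κ ι β : Type*} {m0 : MeasurableSpace Ω}
    [MeasurableSpace β] [Countable ι] {P : Measure Ω} {X : κ → Ω → β} (hX : iIndepFun X P)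
    {k₀ : κ} (hid : ∀ k, IdentDistrib (X k) (X k₀) P P) {e₁ e₂ : ι → κ}
    (he₁ : Function.Injective e₁) (he₂ : Function.Injective e₂) :
    IdentDistrib (fun ω i => X (e₁ i) ω) (fun ω i => X (e₂ i) ω) P P :=
  IdentDistrib.pi (fun _ => (hid _).trans (hid _).symm) (hX.precomp he₁) (hX.precomp he₂)

lemma measure_inter_shift_preimage {Ω β : Type*} {m0 : MeasurableSpace Ω} [MeasurableSpace β]
    {P : Measure Ω} {X : ℕ → Ω → β} (hXm : ∀ j, Measurable (X j)) (hX : iIndepFun X P)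
    (hid : ∀ j, IdentDistrib (X j) (X 0) P P) {t : ℕ} {s : Set Ω}
    (hs : MeasurableSet[⨆ j < t, MeasurableSpace.comap (X j) inferInstance] s) {U : Set (ℕ → β)}
    (hU : MeasurableSet U) :
    P (s ∩ (fun ω j => X (t + j) ω) ⁻¹' U) = P s * P ((fun ω j => X j ω) ⁻¹' U) := by
  have hindep := indep_iSup_of_disjoint (fun j => (hXm j).comap_le)
    ((iIndepFun_iff_iIndep _ _ _).1 hX) (Set.Iio_disjoint_Ici (le_refl t))
  have hfuture : Measurable[⨆ j ∈ Set.Ici t, MeasurableSpace.comap (X j) inferInstance]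
      (fun ω j => X (t + j) ω) :=
    @measurable_pi_lambda _ _ _ (⨆ j ∈ Set.Ici t, MeasurableSpace.comap (X j) inferInstance) _ _
      fun j => Measurable.of_comap_le <| le_iSup₂ (f := fun j (_ : j ∈ Set.Ici t) =>
        MeasurableSpace.comap (X j) inferInstance) (t + j) (Nat.le_add_right t j)
  rw [(Indep_iff _ _ _).1 hindep _ _ hs (hfuture hU),
    (hX.identDistrib_precomp hid (add_right_injective t) Function.injective_id).measure_mem_eq hU]
  rfl

section RandomWalk

variable {Ω : Type*} {m0 : MeasurableSpace Ω} {P : Measure Ω} {X : ℕ → Ω → ℝ}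

lemma exists_measure_exists_sum_le_lt [IsProbabilityMeasure P] (hXm : ∀ j, Measurable (X j))
    (hX : iIndepFun X P)
    (hid : ∀ j, IdentDistrib (X j) (X 0) P P) (hint : Integrable (X 0) P) {c : ℝ}
    (hc : c < P[X 0]) {ε : ℝ≥0∞} (hε : 0 < ε) :
    ∃ N : ℕ, P {ω | ∃ n ≥ N, ∑ j ∈ range n, X j ω ≤ n * c} < ε := by
  set bad : ℕ → Set Ω := fun N => {ω | ∃ n ≥ N, ∑ j ∈ range n, X j ω ≤ n * c}
  have hmeas : ∀ N, NullMeasurableSet (bad N) P := fun N => by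
    simp only [bad, Set.ofPred_exists, Set.ofPred_and]
    exact (MeasurableSet.iUnion fun n => (MeasurableSet.const _).inter
      (measurableSet_le (by fun_prop) (by fun_prop))).nullMeasurableSet
  have hanti : Antitone bad := fun N₁ N₂ h ω ⟨n, hn, hle⟩ => ⟨n, h.trans hn, hle⟩
  have hnull : P (⋂ N, bad N) = 0 := by
    refine measure_mono_null (fun ω hω => ?_)
      (ae_iff.1 (strong_law_ae X hint (fun i j hij => hX.indepFun hij) hid))
    rw [Set.mem_ofPred_eq]
    intro htend
    obtain ⟨N, hN⟩ := ((htend.eventually (lt_mem_nhds hc)).and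
      (eventually_gt_atTop 0)).exists_forall_of_atTop
    obtain ⟨n, hn, hle⟩ := Set.mem_iInter.1 hω N
    obtain ⟨hlt, hpos⟩ := hN n hn
    rw [smul_eq_mul, lt_inv_mul_iff₀ (by exact_mod_cast hpos)] at hlt
    linarith
  have := tendsto_measure_iInter_atTop hmeas hanti ⟨0, measure_ne_top _ _⟩
  rw [hnull] at this
  exact (this.eventually (gt_mem_nhds hε)).exists

lemma measure_inter_exists_sum_le_le (hXm : ∀ j, Measurable (X j)) (hX : iIndepFun X P)
    (hid : ∀ j, IdentDistrib (X j) (X 0) P P) {b : ℝ} {L : ℕ} {r : ℝ≥0∞}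
    (hL : P {ω | ∃ n, L < n ∧ ∑ j ∈ range n, X j ω ≤ b} ≤ r) {t : ℕ} {s : Set Ω}
    (hs : MeasurableSet[⨆ j < t, MeasurableSpace.comap (X j) inferInstance] s) :
    P (s ∩ {ω | ∃ n, L < n ∧ ∑ j ∈ range n, X (t + j) ω ≤ b}) ≤ P s * r := by
  have hU : MeasurableSet {x : ℕ → ℝ | ∃ n, L < n ∧ ∑ j ∈ range n, x j ≤ b} := by
    simp only [Set.ofPred_exists, Set.ofPred_and]
    exact .iUnion fun n => (MeasurableSet.const _).inter
      (measurableSet_le (by fun_prop) measurable_const)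
  calc _ = P s * P {ω | ∃ n, L < n ∧ ∑ j ∈ range n, X j ω ≤ b} :=
        measure_inter_shift_preimage hXm hX hid hs hU
    _ ≤ P s * r := by gcongr

lemma measurable_sum_range_of_le {n t : ℕ} (hn : n ≤ t) :
    Measurable[⨆ j < t, MeasurableSpace.comap (X j) inferInstance]
      (fun ω => ∑ j ∈ range n, X j ω) :=
  Finset.measurable_sum _ fun j hj => Measurable.of_comap_le <|
    le_iSup₂ (f := fun j (_ : j < t) => MeasurableSpace.comap (X j) inferInstance) j
      ((mem_range.1 hj).trans_le hn)

theorem tsum_measure_inter_visit_le [IsProbabilityMeasure P] (hXm : ∀ j, Measurable (X j))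
    (hX : iIndepFun X P)
    (hid : ∀ j, IdentDistrib (X j) (X 0) P P) {b : ℝ} {L : ℕ}
    (hL : P {ω | ∃ n, L < n ∧ ∑ j ∈ range n, X j ω ≤ b} ≤ 2⁻¹) {α : ℝ} (h0 : 0 ≤ α)
    (h1 : α ≤ 1) {E : Set Ω} (hE : MeasurableSet E) (a : ℝ) :
    ∑' n, P (E ∩ {ω | a < ∑ j ∈ range n, X j ω ∧ ∑ j ∈ range n, X j ω ≤ a + b}) ≤
      (L + 1) * (1 - 2⁻¹ ^ (1 - α))⁻¹ * P E ^ α := by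
  set S : ℕ → Ω → ℝ := fun n ω => ∑ j ∈ range n, X j ω
  set V : ℕ → Set Ω := fun n => {ω | a < S n ω ∧ S n ω ≤ a + b}
  set T : ℕ → Set Ω := fun t => {ω | ∃ n, L < n ∧ ∑ j ∈ range n, X (t + j) ω ≤ b}
  set F : ℕ → MeasurableSpace Ω := fun t => ⨆ j < t, MeasurableSpace.comap (X j) inferInstance
  have hF : ∀ t, F t ≤ m0 := fun t => iSup₂_le fun j _ => (hXm j).comap_le
  have hV : ∀ n t, n ≤ t → MeasurableSet[F t] (V n) := fun n t hn =>
    (measurableSet_lt measurable_const (measurable_sum_range_of_le hn)).inter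
      (measurableSet_le (measurable_sum_range_of_le hn) measurable_const)
  have hT : ∀ t s, MeasurableSet[F t] s → P (s ∩ T t) ≤ P s * 2⁻¹ := fun t s hs =>
    measure_inter_exists_sum_le_le hXm hX hid hL hs
  have hVT : ∀ ω t s, ω ∈ V t → ω ∈ V s → t + L < s → ω ∈ T t := by
    rintro ω t s ⟨ht, -⟩ ⟨-, hs⟩ hts
    refine ⟨s - t, by omega, ?_⟩
    have : S s ω = S t ω + ∑ j ∈ range (s - t), X (t + j) ω := by
      simp only [S]
      rw [← Finset.sum_range_add, Nat.add_sub_cancel' (by omega)]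
    linarith
  have hVm : ∀ n, MeasurableSet (V n) := fun n => hF n _ (hV n n le_rfl)
  calc ∑' n, P (E ∩ V n) = ∑' n, P.restrict E (V n) := by
        simp_rw [Measure.restrict_apply (hVm _), Set.inter_comm]
    _ ≤ (L + 1) * ∑' k, P.restrict E {ω | HasSepChain {n | ω ∈ V n} L k} :=
        tsum_measure_le_mul_tsum_measure_hasSepChain _ hVm L
    _ ≤ (L + 1) * ∑' k, P E ^ α * (2⁻¹ ^ (1 - α)) ^ k := by
        gcongr with k
        rw [Measure.restrict_apply' hE, Set.inter_comm]
        calc _ ≤ P E ^ α * P {ω | HasSepChain {n | ω ∈ V n} L k} ^ (1 - α) :=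
              measure_inter_le_rpow_mul_rpow P _ _ h0 h1
          _ ≤ P E ^ α * ((2⁻¹ : ℝ≥0∞) ^ k) ^ (1 - α) := by
              gcongr
              exact measure_hasSepChain_le hF hV hT hVT k
          _ = P E ^ α * (2⁻¹ ^ (1 - α)) ^ k := by
              rw [← ENNReal.rpow_natCast, ← ENNReal.rpow_mul, mul_comm (k : ℝ), ENNReal.rpow_mul,
                ENNReal.rpow_natCast]
    _ = (L + 1) * (1 - 2⁻¹ ^ (1 - α))⁻¹ * P E ^ α := by
        rw [ENNReal.tsum_mul_left, ENNReal.tsum_geometric]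
        ring

theorem exists_tsum_measure_inter_visit_le [IsProbabilityMeasure P]
    (hXm : ∀ j, Measurable (X j)) (hX : iIndepFun X P)
    (hid : ∀ j, IdentDistrib (X j) (X 0) P P) (hint : Integrable (X 0) P) (hμ : 0 < P[X 0])
    {α : ℝ} (h0 : 0 ≤ α) (h1 : α < 1) :
    ∃ C : ℝ≥0∞, C ≠ ⊤ ∧ ∀ E : Set Ω, MeasurableSet E → ∀ a b : ℝ, 0 ≤ b →
      ∑' n, P (E ∩ {ω | a < ∑ j ∈ range n, X j ω ∧ ∑ j ∈ range n, X j ω ≤ a + b}) ≤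
        C * ENNReal.ofReal (1 + b) * P E ^ α := by
  set μ := P[X 0]
  obtain ⟨L₀, hL₀⟩ := exists_measure_exists_sum_le_lt hXm hX hid hint (half_lt_self hμ)
    (show (0 : ℝ≥0∞) < 2⁻¹ by norm_num)
  have hr : (2⁻¹ : ℝ≥0∞) ^ (1 - α) < 1 := ENNReal.rpow_lt_one (by norm_num) (by linarith)
  refine ⟨ENNReal.ofReal (L₀ + 2 + 2 / μ) * (1 - 2⁻¹ ^ (1 - α))⁻¹,
    ENNReal.mul_ne_top ENNReal.ofReal_ne_top (ENNReal.inv_ne_top.2 (tsub_pos_of_lt hr).ne'),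
    fun E hE a b hb => ?_⟩
  set L := L₀ + ⌈2 * b / μ⌉₊
  have hL : P {ω | ∃ n, L < n ∧ ∑ j ∈ range n, X j ω ≤ b} ≤ 2⁻¹ := by
    refine (measure_mono fun ω hω => ?_).trans hL₀.le
    obtain ⟨n, hn, hle⟩ := hω
    refine ⟨n, by omega, ?_⟩
    have : 2 * b / μ ≤ n :=
      (Nat.le_ceil _).trans (by exact_mod_cast (by omega : ⌈2 * b / μ⌉₊ ≤ n))
    rw [div_le_iff₀ hμ] at this
    linarith
  have hLb : (L + 1 : ℝ≥0∞) ≤ ENNReal.ofReal (L₀ + 2 + 2 / μ) * ENNReal.ofReal (1 + b) := by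
    rw [← ENNReal.ofReal_mul (by positivity), ← ENNReal.ofReal_natCast, ← ENNReal.ofReal_one,
      ← ENNReal.ofReal_add (by positivity) zero_le_one]
    refine ENNReal.ofReal_le_ofReal ?_
    have hceil := Nat.ceil_lt_add_one (show 0 ≤ 2 * b / μ by positivity)
    have hexpand : ((L₀ : ℝ) + 2 + 2 / μ) * (1 + b) =
        L₀ + 2 + 2 / μ + L₀ * b + 2 * b + 2 * b / μ := by ring
    push_cast [L]
    linarith [mul_nonneg (Nat.cast_nonneg L₀ : (0 : ℝ) ≤ L₀) hb, show 0 ≤ 2 / μ by positivity]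
  calc _ ≤ (L + 1) * (1 - 2⁻¹ ^ (1 - α))⁻¹ * P E ^ α :=
        tsum_measure_inter_visit_le hXm hX hid hL h0 h1.le hE a
    _ ≤ ENNReal.ofReal (L₀ + 2 + 2 / μ) * ENNReal.ofReal (1 + b) * (1 - 2⁻¹ ^ (1 - α))⁻¹ *
          P E ^ α := by gcongr
    _ = _ := by ring

end RandomWalk

lemma sum_Icc_one_eq_sum_range_sub {M : Type*} [AddCommMonoid M] (f : ℤ → M) (n : ℕ) :
    ∑ k ∈ Icc 1 n, f k = ∑ j ∈ range n, f (n - j) := by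
  refine Finset.sum_nbij' (fun k => n - k) (fun j => n - j) ?_ ?_ ?_ ?_ ?_ <;>
    intro k hk <;> simp only [mem_Icc, mem_range] at hk ⊢
  all_goals try omega
  congr 1
  omega

lemma measure_shift_mem_and_sum_mem_eq {Ω 𝕎 : Type*} {m0 : MeasurableSpace Ω}
    [MeasurableSpace 𝕎] {P : Measure Ω} {W : ℤ → Ω → 𝕎} (hW : iIndepFun W P)
    (hid : ∀ k, IdentDistrib (W k) (W 0) P P) {φ : 𝕎 → ℝ} (hφ : Measurable φ)
    {B : Set (ℤ → 𝕎)} (hB : MeasurableSet B) {I : Set ℝ} (hI : MeasurableSet I) (n : ℕ) :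
    P {ω | (fun j => W (n + j) ω) ∈ B ∧ ∑ k ∈ Icc 1 n, φ (W k ω) ∈ I} =
      P {ω | (fun j => W j ω) ∈ B ∧ ∑ j ∈ range n, φ (W (-j) ω) ∈ I} := by
  set g : (ℤ → 𝕎) → ℝ := fun w => ∑ j ∈ range n, φ (w (-j))
  have hg : Measurable g := Finset.measurable_sum _ fun j _ => hφ.comp (measurable_pi_apply _)
  convert (hW.identDistrib_precomp hid (add_right_injective (n : ℤ))
    Function.injective_id).measure_mem_eq (hB.inter (hg hI)) using 2 <;> ext ω
  · simp [g, sum_Icc_one_eq_sum_range_sub (fun k => φ (W k ω)), sub_eq_add_neg]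
  · rfl

theorem statement9_general
    {Ω : Type*} [MeasureSpace Ω] [IsProbabilityMeasure (ℙ : Measure Ω)]
    {𝕎 : Type*} [MeasurableSpace 𝕎]
    (W : ℤ → Ω → 𝕎) (hWmeas : ∀ k, Measurable (W k))
    (hWindep : iIndepFun W ℙ)
    (hWid : ∀ k, IdentDistrib (W k) (W 0) ℙ ℙ)
    (φ : 𝕎 → ℝ) (hφ : Measurable φ)
    (μ : ℝ) (hμ : 0 < μ) (hmean : ∫ ω, φ (W 1 ω) ∂ℙ = μ)
    (hvar : Integrable (fun ω => (φ (W 1 ω)) ^ 2) ℙ)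
    (S : ℕ → Ω → ℝ) (hS : ∀ n ω, S n ω = ∑ k ∈ Finset.Icc 1 n, φ (W k ω))
    (Wstar : ℕ → Ω → ℤ → 𝕎) (hWstar : ∀ n ω j, Wstar n ω j = W (n + j) ω)
    (α : ℝ) (hα : 0 < α) (hα' : α < 1) :
    ∃ K₁ : ℝ, ∀ B : Set (ℤ → 𝕎), MeasurableSet B → ∀ a b : ℝ, 0 ≤ a → 0 ≤ b →
      ∑' n : ℕ, (ℙ {ω | Wstar n ω ∈ B ∧ a < S n ω ∧ S n ω ≤ a + b}).toReal ≤
        K₁ * (1 + b) * (ℙ {ω | Wstar 0 ω ∈ B}).toReal ^ α := by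
  obtain rfl : Wstar = fun (n : ℕ) ω j => W (n + j) ω := funext fun n => funext₂ (hWstar n)
  obtain rfl : S = fun (n : ℕ) ω => ∑ k ∈ Icc 1 n, φ (W k ω) := funext₂ hS
  set X : ℕ → Ω → ℝ := fun j ω => φ (W (-j) ω)
  have hXm : ∀ j, Measurable (X j) := fun j => hφ.comp (hWmeas _)
  have hX : iIndepFun X ℙ :=
    (hWindep.precomp (neg_injective.comp Nat.cast_injective)).comp (fun _ => φ) fun _ => hφ
  have hid : ∀ j, IdentDistrib (X j) (X 0) ℙ ℙ := fun j => ((hWid _).trans (hWid _).symm).comp hφ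
  have hX0 : IdentDistrib (X 0) (fun ω => φ (W 1 ω)) ℙ ℙ := ((hWid _).trans (hWid 1).symm).comp hφ
  have hint : Integrable (X 0) ℙ := hX0.integrable_iff.2 <|
    ((memLp_two_iff_integrable_sq (hφ.comp (hWmeas 1)).aestronglyMeasurable).2 hvar).integrable
      one_le_two
  obtain ⟨C, hC, hCle⟩ := exists_tsum_measure_inter_visit_le hXm hX hid hint
    (hX0.integral_eq.trans hmean ▸ hμ) hα.le hα'
  refine ⟨C.toReal, fun B hB a b _ hb => ?_⟩
  have hterm : ∀ n : ℕ, ℙ {ω | (fun j => W (n + j) ω) ∈ B ∧ a < ∑ k ∈ Icc 1 n, φ (W k ω) ∧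
      ∑ k ∈ Icc 1 n, φ (W k ω) ≤ a + b} = ℙ ({ω | (fun j => W j ω) ∈ B} ∩
        {ω | a < ∑ j ∈ range n, X j ω ∧ ∑ j ∈ range n, X j ω ≤ a + b}) :=
    measure_shift_mem_and_sum_mem_eq hWindep hWid hφ hB measurableSet_Ioc
  have hE : MeasurableSet {ω | (fun j => W j ω) ∈ B} :=
    measurableSet_preimage (measurable_pi_lambda _ hWmeas) hB
  simp only [Nat.cast_zero, zero_add]
  rw [← ENNReal.tsum_toReal_eq fun _ => measure_ne_top _ _, tsum_congr hterm]
  calc _ ≤ (C * ENNReal.ofReal (1 + b) * ℙ {ω | (fun j => W j ω) ∈ B} ^ α).toReal :=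
        ENNReal.toReal_mono (by finiteness) (hCle _ hE a b hb)
    _ = _ := by
        rw [ENNReal.toReal_mul, ENNReal.toReal_mul, ENNReal.toReal_ofReal (by linarith),
          ENNReal.toReal_rpow]

/-- (Lemma 2, first part.) For i.i.d. `W k` (k ∈ ℤ) in a Polish space,
`X k = φ(W k)` i.i.d., non-arithmetic, mean `μ > 0`, finite variance, and `0 < α < 1`,
there is a constant `K₁ = K_{1,α}` such that
`∑ₙ P(W*_n ∈ B, a < S_n ≤ a + b) ≤ K₁ (1 + b) P(W*_0 ∈ B)^α`
for all measurable `B ⊆ 𝕎^ℤ` and all `0 ≤ a, b`, where `(W*_n)_j = W_{n+j}`. -/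
theorem statement9
    {Ω : Type*} [MeasureSpace Ω] [IsProbabilityMeasure (ℙ : Measure Ω)]
    {𝕎 : Type*} [MeasurableSpace 𝕎] [StandardBorelSpace 𝕎]
    (W : ℤ → Ω → 𝕎) (hWmeas : ∀ k, Measurable (W k))
    (hWindep : iIndepFun W ℙ)
    (hWid : ∀ k, IdentDistrib (W k) (W 0) ℙ ℙ)
    (φ : 𝕎 → ℝ) (hφ : Measurable φ)
    (μ : ℝ) (hμ : 0 < μ) (hmean : ∫ ω, φ (W 1 ω) ∂ℙ = μ)
    (hvar : Integrable (fun ω => (φ (W 1 ω)) ^ 2) ℙ)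
    (hnonarith : ¬ ∃ c > 0, ∀ᵐ ω ∂ℙ, ∃ k : ℤ, φ (W 1 ω) = k * c)
    (S : ℕ → Ω → ℝ) (hS : ∀ n ω, S n ω = ∑ k ∈ Finset.Icc 1 n, φ (W k ω))
    (Wstar : ℕ → Ω → ℤ → 𝕎) (hWstar : ∀ n ω j, Wstar n ω j = W (n + j) ω)
    (α : ℝ) (hα : 0 < α) (hα' : α < 1) :
    ∃ K₁ : ℝ, ∀ B : Set (ℤ → 𝕎), MeasurableSet B → ∀ a b : ℝ, 0 ≤ a → 0 ≤ b →
      ∑' n : ℕ, (ℙ {ω | Wstar n ω ∈ B ∧ a < S n ω ∧ S n ω ≤ a + b}).toReal ≤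
        K₁ * (1 + b) * (ℙ {ω | Wstar 0 ω ∈ B}).toReal ^ α :=
  statement9_general W hWmeas hWindep hWid φ hφ μ hμ hmean hvar S hS Wstar hWstar α hα hα'
end

section
/- Let ξ^o_n = Σ_{k=1}^n [L_{n−k+1} − (τ_n − τ_{n−k})]_+ with L_k i.i.d. Exp(θ) independent of the Poisson arrival process with interarrival times η_k i.i.d. Exp(λ). Then for every p > 0, sup_n E|ξ^o_n|^p < ∞. -/
/-!
Write `S_{n,k} = τ_n − τ_{n−k}`: a sum of `k` independent `Exp(λ)` variables, independent of
`L_{n−k+1}`. Fix an integer `m ≥ p` and `0 < t < θ`. The bound `x₊^m ≤ m! t^{-m} e^{tx}` turns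
the `m`-th moment of a summand of `ξ⁰_n` into a moment generating function,
`E[L_{n−k+1} − S_{n,k}]₊^m ≤ m! t^{-m} · θ/(θ−t) · (λ/(λ+t))^k`, which decays geometrically in
`k`. By Minkowski's inequality the `L^m`-norm of `ξ⁰_n` is bounded by a convergent geometric
series, uniformly in `n`, and on a probability space the `L^p`-norm is at most the `L^m`-norm.
-/

open MeasureTheory ProbabilityTheory Finset Real
open scoped ENNReal Nat

section ExponentialDistribution

variable {ρ u : ℝ}

lemma lintegral_exp_mul_expMeasure (hρ : 0 < ρ) (hu : u < ρ) :
    ∫⁻ x, ENNReal.ofReal (exp (u * x)) ∂expMeasure ρ = ENNReal.ofReal (ρ / (ρ - u)) := by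
  have hρu : 0 < ρ - u := by linarith
  have hpdf : ∀ v : ℝ, Measurable (exponentialPDF v) := fun v =>
    (measurable_exponentialPDFReal v).ennreal_ofReal
  -- `ρ e^{-ρx} e^{ux} = ρ/(ρ-u) · (ρ-u) e^{-(ρ-u)x}`: a rescaled `Exp(ρ - u)` density
  have hdensity : ∀ x : ℝ, exponentialPDF ρ x * ENNReal.ofReal (exp (u * x))
      = ENNReal.ofReal (ρ / (ρ - u)) * exponentialPDF (ρ - u) x := by
    intro x
    rcases le_or_gt 0 x with hx | hx
    · rw [exponentialPDF_of_nonneg hx, exponentialPDF_of_nonneg hx,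
        ← ENNReal.ofReal_mul (by positivity), ← ENNReal.ofReal_mul (by positivity)]
      congr 1
      rw [mul_assoc, ← exp_add, show -(ρ * x) + u * x = -((ρ - u) * x) by ring, ← mul_assoc,
        div_mul_cancel₀ ρ hρu.ne']
    · rw [exponentialPDF_of_neg hx, exponentialPDF_of_neg hx, zero_mul, mul_zero]
  rw [show expMeasure ρ = volume.withDensity (exponentialPDF ρ) from rfl,
    lintegral_withDensity_eq_lintegral_mul _ (hpdf ρ) (by fun_prop)]
  simp only [Pi.mul_apply, hdensity]
  rw [lintegral_const_mul _ (hpdf _), lintegral_exponentialPDF_eq_one hρu, mul_one]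

lemma mgf_id_expMeasure (hρ : 0 < ρ) (hu : u < ρ) :
    mgf id (expMeasure ρ) u = ρ / (ρ - u) := by
  have hρu : 0 < ρ - u := by linarith
  rw [mgf, integral_eq_lintegral_of_nonneg_ae (ae_of_all _ fun x => (exp_pos _).le)
    (by fun_prop)]
  simp only [id, lintegral_exp_mul_expMeasure hρ hu]
  exact ENNReal.toReal_ofReal (by positivity)

lemma mgf_of_map_eq_expMeasure {Ω : Type*} {mΩ : MeasurableSpace Ω} {μ : Measure Ω}
    {Y : Ω → ℝ} (hY : AEMeasurable Y μ) (hρ : 0 < ρ) (hmap : μ.map Y = expMeasure ρ)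
    (hu : u < ρ) : mgf Y μ u = ρ / (ρ - u) := by
  rw [← mgf_id_map hY, hmap, mgf_id_expMeasure hρ hu]

end ExponentialDistribution

section MomentsFromMgf

variable {Ω : Type*} {mΩ : MeasurableSpace Ω} {μ : Measure Ω} {t : ℝ} {m : ℕ}

lemma posPart_pow_le_exp (ht : 0 < t) (hm : m ≠ 0) (x : ℝ) :
    max x 0 ^ m ≤ m ! / t ^ m * exp (t * x) := by
  rcases le_or_gt x 0 with hx | hx
  · rw [max_eq_right hx, zero_pow hm]
    positivity
  · have h := Real.pow_div_factorial_le_exp (t * x) (by positivity) m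
    rw [max_eq_left hx.le, div_mul_eq_mul_div, le_div_iff₀ (by positivity)]
    rw [div_le_iff₀ (by positivity), mul_pow] at h
    linarith

lemma lintegral_posPart_pow_le_mgf {X : Ω → ℝ} (ht : 0 < t) (hm : m ≠ 0)
    (hX : Integrable (fun ω => exp (t * X ω)) μ) :
    ∫⁻ ω, ENNReal.ofReal (max (X ω) 0 ^ m) ∂μ ≤ ENNReal.ofReal (m ! / t ^ m * mgf X μ t) := by
  calc ∫⁻ ω, ENNReal.ofReal (max (X ω) 0 ^ m) ∂μ
      ≤ ∫⁻ ω, ENNReal.ofReal (m ! / t ^ m * exp (t * X ω)) ∂μ :=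
        lintegral_mono fun ω => ENNReal.ofReal_le_ofReal (posPart_pow_le_exp ht hm _)
    _ = ENNReal.ofReal (m ! / t ^ m * mgf X μ t) := by
        rw [mgf, ← integral_const_mul, ofReal_integral_eq_lintegral_ofReal (hX.const_mul _)
          (ae_of_all _ fun ω => by positivity)]

lemma eLpNorm_posPart_le_mgf {X : Ω → ℝ} (ht : 0 < t) (hm : m ≠ 0)
    (hX : Integrable (fun ω => exp (t * X ω)) μ) :
    eLpNorm (fun ω => max (X ω) 0) m μ
      ≤ ENNReal.ofReal ((m ! / t ^ m * mgf X μ t) ^ (1 / (m : ℝ))) := by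
  rw [eLpNorm_eq_lintegral_rpow_enorm_toReal (by exact_mod_cast hm) (ENNReal.natCast_ne_top m),
    ENNReal.toReal_natCast,
    ← ENNReal.ofReal_rpow_of_nonneg (mul_nonneg (by positivity) mgf_nonneg) (by positivity)]
  gcongr
  calc ∫⁻ ω, ‖max (X ω) 0‖ₑ ^ (m : ℝ) ∂μ = ∫⁻ ω, ENNReal.ofReal (max (X ω) 0 ^ m) ∂μ := by
        simp only [enorm_of_nonneg (le_max_right _ _), ENNReal.rpow_natCast,
          ENNReal.ofReal_pow (le_max_right _ _)]
    _ ≤ _ := lintegral_posPart_pow_le_mgf ht hm hX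

end MomentsFromMgf

lemma integral_abs_rpow_le_of_eLpNorm_le {Ω : Type*} {mΩ : MeasurableSpace Ω} {μ : Measure Ω}
    {f : Ω → ℝ} {p K : ℝ} (hp : 0 < p) (hK : 0 ≤ K) (hf : AEStronglyMeasurable f μ)
    (h : eLpNorm f (ENNReal.ofReal p) μ ≤ ENNReal.ofReal K) :
    ∫ ω, |f ω| ^ p ∂μ ≤ K ^ p := by
  have hmem : MemLp f (ENNReal.ofReal p) μ := ⟨hf, h.trans_lt ENNReal.ofReal_lt_top⟩
  rw [hmem.eLpNorm_eq_integral_rpow_norm (by simpa using hp) ENNReal.ofReal_ne_top,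
    ENNReal.toReal_ofReal hp.le, ENNReal.ofReal_le_ofReal_iff hK] at h
  simp only [Real.norm_eq_abs] at h
  rw [← rpow_inv_rpow (integral_nonneg fun ω => by positivity) hp.ne']
  gcongr

lemma sum_Icc_mul_geometric_le {a s : ℝ} (ha : 0 ≤ a) (hs₀ : 0 ≤ s) (hs₁ : s < 1) (n : ℕ) :
    ∑ k ∈ Icc 1 n, a * s ^ k ≤ a / (1 - s) := by
  rw [← mul_sum, div_eq_mul_inv, ← tsum_geometric_of_lt_one hs₀ hs₁]
  gcongr
  exact (summable_geometric_of_lt_one hs₀ hs₁).sum_le_tsum _ fun k _ => by positivity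

lemma eLpNorm_sum_le_of_le_geometric {α : Type*} {mα : MeasurableSpace α} {μ : Measure α}
    {q : ℝ≥0∞} (hq : 1 ≤ q) {Y : ℕ → α → ℝ} (hY : ∀ k, AEStronglyMeasurable (Y k) μ)
    {a s : ℝ} (ha : 0 ≤ a) (hs₀ : 0 ≤ s) (hs₁ : s < 1) {n : ℕ}
    (hbound : ∀ k ∈ Icc 1 n, eLpNorm (Y k) q μ ≤ ENNReal.ofReal (a * s ^ k)) :
    eLpNorm (∑ k ∈ Icc 1 n, Y k) q μ ≤ ENNReal.ofReal (a / (1 - s)) :=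
  calc eLpNorm (∑ k ∈ Icc 1 n, Y k) q μ ≤ ∑ k ∈ Icc 1 n, eLpNorm (Y k) q μ :=
        eLpNorm_sum_le (fun k _ => hY k) hq
    _ ≤ ∑ k ∈ Icc 1 n, ENNReal.ofReal (a * s ^ k) := sum_le_sum hbound
    _ = ENNReal.ofReal (∑ k ∈ Icc 1 n, a * s ^ k) :=
        (ENNReal.ofReal_sum_of_nonneg fun k _ => by positivity).symm
    _ ≤ ENNReal.ofReal (a / (1 - s)) :=
        ENNReal.ofReal_le_ofReal (sum_Icc_mul_geometric_le ha hs₀ hs₁ n)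

lemma sum_Icc_one_sub_sum_Icc_one {M : Type*} [AddCommGroup M] (f : ℕ → M) {a b : ℕ}
    (hab : a ≤ b) : ∑ i ∈ Icc 1 b, f i - ∑ i ∈ Icc 1 a, f i = ∑ i ∈ Ioc a b, f i := by
  have hIcc : ∀ c : ℕ, Icc 1 c = Ioc 0 c := Icc_succ_left_eq_Ioc 0
  rw [hIcc, hIcc, ← sum_Ioc_consecutive _ (Nat.zero_le a) hab, add_sub_cancel_left]

lemma iIndepFun_sumElim_neg {Ω ι κ : Type*} {mΩ : MeasurableSpace Ω} {μ : Measure Ω}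
    {X : ι → Ω → ℝ} {Y : κ → Ω → ℝ} (h : iIndepFun (fun s => Sum.elim X Y s) μ) :
    iIndepFun (fun s => Sum.elim X (fun i => -Y i) s) μ := by
  have hg : ∀ s : ι ⊕ κ, Measurable (Sum.elim (fun _ => id) (fun _ => Neg.neg) s : ℝ → ℝ) := by
    rintro (i | i)
    exacts [measurable_id, measurable_neg]
  convert h.comp _ hg using 1
  ext (i | i) ω <;> rfl

section ArrivalModel

variable {Ω : Type*} {mΩ : MeasurableSpace Ω} {μ : Measure Ω} {θ lam t : ℝ} {L η : ℕ → Ω → ℝ}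
  {j : ℕ} {I : Finset ℕ}

lemma mgf_sub_sum_of_expMeasure (hθ : 0 < θ) (hlam : 0 < lam)
    (hLmeas : ∀ k, Measurable (L k)) (hηmeas : ∀ k, Measurable (η k))
    (hLj : μ.map (L j) = expMeasure θ) (hηI : ∀ i ∈ I, μ.map (η i) = expMeasure lam)
    (hindep : iIndepFun (fun s => Sum.elim L η s) μ) (htθ : t < θ) (htlam : -lam < t) :
    mgf (fun ω => L j ω - ∑ i ∈ I, η i ω) μ t = θ / (θ - t) * (lam / (lam + t)) ^ #I := by
  set X : ℕ ⊕ ℕ → Ω → ℝ := fun s => Sum.elim L (fun i => -η i) s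
  have hXmeas : ∀ s, Measurable (X s) := by
    rintro (i | i)
    exacts [hLmeas i, (hηmeas i).neg]
  have hX : (fun ω => L j ω - ∑ i ∈ I, η i ω) = ∑ s ∈ ({j} : Finset ℕ).disjSum I, X s := by
    ext ω
    simp [X, sum_disjSum, Finset.sum_apply, sub_eq_add_neg]
  have hηmgf : ∀ i ∈ I, mgf (-η i) μ t = lam / (lam + t) := fun i hi => by
    rw [mgf_neg, mgf_of_map_eq_expMeasure (hηmeas i).aemeasurable hlam (hηI i hi) (by linarith),
      sub_neg_eq_add]
  rw [hX, (iIndepFun_sumElim_neg hindep).mgf_sum hXmeas, prod_disjSum, prod_singleton]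
  simp only [Sum.elim_inl, Sum.elim_inr]
  rw [prod_congr rfl hηmgf, prod_const,
    mgf_of_map_eq_expMeasure (hLmeas j).aemeasurable hθ hLj htθ]

lemma eLpNorm_posPart_sub_sum_le [IsProbabilityMeasure μ] (hθ : 0 < θ) (hlam : 0 < lam)
    (hLmeas : ∀ k, Measurable (L k)) (hηmeas : ∀ k, Measurable (η k))
    (hLj : μ.map (L j) = expMeasure θ) (hηI : ∀ i ∈ I, μ.map (η i) = expMeasure lam)
    (hindep : iIndepFun (fun s => Sum.elim L η s) μ) {m : ℕ} (hm : m ≠ 0) (ht : 0 < t)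
    (htθ : t < θ) :
    eLpNorm (fun ω => max (L j ω - ∑ i ∈ I, η i ω) 0) m μ ≤
      ENNReal.ofReal ((m ! / t ^ m * (θ / (θ - t))) ^ (1 / (m : ℝ)) *
        ((lam / (lam + t)) ^ (1 / (m : ℝ))) ^ #I) := by
  have hθt : 0 < θ - t := by linarith
  have hmgf := mgf_sub_sum_of_expMeasure hθ hlam hLmeas hηmeas hLj hηI hindep htθ (by linarith)
  have hint : Integrable (fun ω => exp (t * (L j ω - ∑ i ∈ I, η i ω))) μ :=
    mgf_pos_iff.mp (by rw [hmgf]; positivity)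
  refine (eLpNorm_posPart_le_mgf ht hm hint).trans_eq ?_
  rw [hmgf, ← mul_assoc, mul_rpow (by positivity) (by positivity), rpow_pow_comm (by positivity)]

end ArrivalModel

/-- With `ξ⁰_n = ∑_{k=1}^n [L_{n−k+1} − (τ_n − τ_{n−k})]_+`, the `L k`
i.i.d. `Exp(θ)` independent of the Poisson arrival process with i.i.d. `Exp(λ)`
interarrival times `η k` (and `τ n = η_1 + … + η_n`), one has
`sup_n E|ξ⁰_n|^p < ∞` for every `p > 0`. -/
theorem statement17
    {Ω : Type*} [MeasureSpace Ω] [IsProbabilityMeasure (ℙ : Measure Ω)]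
    (θ lam : ℝ) (hθ : 0 < θ) (hlam : 0 < lam)
    (L : ℕ → Ω → ℝ) (η : ℕ → Ω → ℝ)
    (hLmeas : ∀ k, Measurable (L k)) (hηmeas : ∀ k, Measurable (η k))
    (hLexp : ∀ k, 1 ≤ k → Measure.map (L k) ℙ = expMeasure θ)
    (hηexp : ∀ k, 1 ≤ k → Measure.map (η k) ℙ = expMeasure lam)
    (hindep : iIndepFun
      (fun p : ℕ ⊕ ℕ => Sum.elim L η p) ℙ)
    (τ : ℕ → Ω → ℝ) (hτ : ∀ n ω, τ n ω = ∑ k ∈ Finset.Icc 1 n, η k ω)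
    (ξo : ℕ → Ω → ℝ)
    (hξo : ∀ n ω, ξo n ω =
      ∑ k ∈ Finset.Icc 1 n, max (L (n - k + 1) ω - (τ n ω - τ (n - k) ω)) 0)
    (p : ℝ) (hp : 0 < p) :
    ∃ C : ℝ, ∀ n : ℕ, ∫ ω, |ξo n ω| ^ p ∂ℙ ≤ C := by
  obtain ⟨m, hm, hpm⟩ : ∃ m : ℕ, m ≠ 0 ∧ p ≤ m :=
    ⟨⌈p⌉₊, (Nat.ceil_pos.mpr hp).ne', Nat.le_ceil p⟩
  obtain ⟨t, ht, htθ⟩ : ∃ t, 0 < t ∧ t < θ := ⟨θ / 2, by positivity, by linarith⟩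
  have hθt : 0 < θ - t := by linarith
  set a := (m ! / t ^ m * (θ / (θ - t))) ^ (1 / (m : ℝ))
  set s := (lam / (lam + t)) ^ (1 / (m : ℝ))
  have ha : 0 ≤ a := rpow_nonneg (by positivity) _
  have hs₀ : 0 ≤ s := rpow_nonneg (by positivity) _
  have hs₁ : s < 1 :=
    rpow_lt_one (by positivity) ((div_lt_one (by positivity)).2 (by linarith)) (by positivity)
  set Y : ℕ → ℕ → Ω → ℝ := fun n k ω => max (L (n - k + 1) ω - ∑ i ∈ Ioc (n - k) n, η i ω) 0
  have hξ : ∀ n, ξo n = ∑ k ∈ Icc 1 n, Y n k := fun n => by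
    ext ω
    simp only [hξo, hτ, Finset.sum_apply, Y]
    exact sum_congr rfl fun k _ => by rw [sum_Icc_one_sub_sum_Icc_one _ (Nat.sub_le n k)]
  have hYmeas : ∀ n k, Measurable (Y n k) := fun n k => by fun_prop
  have hξmeas : ∀ n, AEStronglyMeasurable (ξo n) ℙ := fun n => by
    rw [hξ]
    exact (Finset.aemeasurable_sum _ fun k _ => (hYmeas n k).aemeasurable).aestronglyMeasurable
  have hY : ∀ n, ∀ k ∈ Icc 1 n, eLpNorm (Y n k) m ℙ ≤ ENNReal.ofReal (a * s ^ k) := by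
    intro n k hk
    obtain ⟨hk₁, hkn⟩ := mem_Icc.1 hk
    have := eLpNorm_posPart_sub_sum_le (j := n - k + 1) (I := Ioc (n - k) n) hθ hlam hLmeas
      hηmeas (hLexp _ (by omega)) (fun i hi => hηexp i (by have := (mem_Ioc.1 hi).1; omega))
      hindep hm ht htθ
    rwa [Nat.card_Ioc, Nat.sub_sub_self hkn] at this
  refine ⟨(a / (1 - s)) ^ p, fun n => integral_abs_rpow_le_of_eLpNorm_le hp
    (div_nonneg ha (sub_nonneg.2 hs₁.le)) (hξmeas n) ?_⟩
  calc eLpNorm (ξo n) (ENNReal.ofReal p) ℙ ≤ eLpNorm (ξo n) m ℙ :=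
        eLpNorm_le_eLpNorm_of_exponent_le
          ((ENNReal.ofReal_le_ofReal hpm).trans_eq (ENNReal.ofReal_natCast m)) (hξmeas n)
    _ ≤ ENNReal.ofReal (a / (1 - s)) := by
        rw [hξ]
        exact eLpNorm_sum_le_of_le_geometric (by exact_mod_cast Nat.one_le_iff_ne_zero.2 hm)
          (fun k => (hYmeas n k).aestronglyMeasurable) ha hs₀ hs₁ (hY n)
end

section
/- Suppose V_a (indexed by a real parameter a → ∞) and V are random vectors in R^k such that the family of distributions of V_a is tight and limsup_{a→∞} P(V_a ∈ K) ≤ P(V ∈ K) for every compact rectangle K ⊂ R^k. Then V_a converges in distribution to V as a → ∞. -/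
/-!
Push the laws forward to `ℝᵏ`: `μ a` for `V a` and `ν` for `V`. Choose a grid of mesh `δ` whose
hyperplanes are `ν`-null; this is possible because each marginal of `ν` has only countably many
atoms. A compact set `C` is covered by the finitely many grid cubes containing its points; these
are closed rectangles that overlap only on the null hyperplanes and lie in the `δ`-thickening of
`C`, so subadditivity of `limsup` gives `limsup μ a C ≤ ∑ ν(cube) = ν(⋃ cubes) ≤ ν(C_δ)`.
Letting `δ → 0` gives `limsup μ a C ≤ ν C` for every compact `C`, which for a tight family is
one of the equivalent conditions of the portmanteau theorem.
-/

open MeasureTheory ProbabilityTheory Filter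

open scoped ENNReal Topology

namespace ENNReal

variable {α : Type*} {L : Filter α}

theorem limsup_add_le_add_limsup (u v : α → ℝ≥0∞) :
    L.limsup (u + v) ≤ L.limsup u + L.limsup v := by
  rcases eq_top_or_lt_top (L.limsup u) with hu | hu
  · simp [hu]
  rcases eq_top_or_lt_top (L.limsup v) with hv | hv
  · simp [hv]
  refine ENNReal.le_of_forall_pos_le_add fun ε hε _ => ?_
  have hε2 : (ε / 2 : ℝ≥0∞) ≠ 0 := by simpa using hε.ne'
  refine limsup_le_of_le (by isBoundedDefault) ?_
  filter_upwards [eventually_lt_of_limsup_lt (ENNReal.lt_add_right hu.ne hε2),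
    eventually_lt_of_limsup_lt (ENNReal.lt_add_right hv.ne hε2)] with i hui hvi
  calc u i + v i ≤ (L.limsup u + ε / 2) + (L.limsup v + ε / 2) := add_le_add hui.le hvi.le
    _ = L.limsup u + L.limsup v + ε := by rw [add_add_add_comm, ENNReal.add_halves]

theorem limsup_sum_le_sum_limsup {κ : Type*} (s : Finset κ) (u : κ → α → ℝ≥0∞) :
    L.limsup (∑ m ∈ s, u m) ≤ ∑ m ∈ s, L.limsup (u m) := by
  classical
  induction s using Finset.induction_on with
  | empty => exact limsup_le_of_le (by isBoundedDefault) (.of_forall fun _ => le_rfl)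
  | insert m s hm ih =>
    rw [Finset.sum_insert hm, Finset.sum_insert hm]
    exact (limsup_add_le_add_limsup _ _).trans (add_le_add le_rfl ih)

theorem limsup_le_of_limsup_toReal_le [L.NeBot] {u : α → ℝ≥0∞} {b c : ℝ≥0∞} (hb : b ≠ ∞)
    (hu : ∀ᶠ i in L, u i ≤ b) (hc : c ≠ ∞) (h : L.limsup (fun i => (u i).toReal) ≤ c.toReal) :
    L.limsup u ≤ c := by
  rw [limsup_toReal_eq hb hu] at h
  exact (toReal_le_toReal (ne_top_of_le_ne_top hb (limsup_le_of_le (by isBoundedDefault) hu))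
    hc).mp h

end ENNReal

section Grid

variable {ι : Type*} {t δ : ℝ}

def gridHyperplanes (t δ : ℝ) : Set (ι → ℝ) := ⋃ j, ⋃ n : ℤ, {x | x j = t + n * δ}

def gridCube (t δ : ℝ) (m : ι → ℤ) : Set (ι → ℝ) :=
  Set.Icc (fun j => t + m j * δ) (fun j => t + (m j + 1) * δ)

noncomputable def gridIndex (t δ : ℝ) (x : ι → ℝ) : ι → ℤ := fun j => ⌊(x j - t) / δ⌋

theorem exists_measure_gridHyperplanes_eq_zero [Countable ι] (ν : Measure (ι → ℝ)) [SFinite ν]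
    (δ : ℝ) : ∃ t, ν (gridHyperplanes t δ) = 0 := by
  have hatoms (j : ι) : {c : ℝ | 0 < ν {x | x j = c}}.Countable :=
    Measure.countable_meas_level_set_pos (measurable_pi_apply j)
  have hbad : (⋃ j, ⋃ n : ℤ, (· + n * δ) ⁻¹' {c : ℝ | 0 < ν {x | x j = c}}).Countable :=
    Set.countable_iUnion fun j => Set.countable_iUnion fun _ =>
      (hatoms j).preimage (add_left_injective _)
  obtain ⟨t, ht⟩ := (hbad.dense_compl ℝ).nonempty
  simp only [Set.mem_compl_iff, Set.mem_iUnion, Set.mem_preimage, Set.mem_ofPred_eq, not_exists,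
    not_lt, nonpos_iff_eq_zero] at ht
  exact ⟨t, measure_iUnion_null fun j => measure_iUnion_null (ht j)⟩

theorem mem_gridCube_gridIndex (hδ : 0 < δ) (x : ι → ℝ) :
    x ∈ gridCube t δ (gridIndex t δ x) := by
  refine ⟨fun j => ?_, fun j => ?_⟩
  · have := (le_div_iff₀ hδ).mp (Int.floor_le ((x j - t) / δ))
    simp only [gridIndex]; linarith
  · have := ((div_lt_iff₀ hδ).mp (Int.lt_floor_add_one ((x j - t) / δ))).le
    simp only [gridIndex]; linarith

theorem monotone_gridIndex (hδ : 0 ≤ δ) : Monotone (gridIndex (ι := ι) t δ) :=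
  fun _ _ hxy j => Int.floor_mono (div_le_div_of_nonneg_right (sub_le_sub_right (hxy j) t) hδ)

theorem dist_le_of_mem_gridCube [Fintype ι] (hδ : 0 ≤ δ) {m : ι → ℤ} {x y : ι → ℝ}
    (hx : x ∈ gridCube t δ m) (hy : y ∈ gridCube t δ m) : dist x y ≤ δ := by
  refine (dist_pi_le_iff hδ).mpr fun j => ?_
  rw [Real.dist_eq, abs_le]
  have := hx.1 j; have := hx.2 j; have := hy.1 j; have := hy.2 j
  constructor <;> linarith

theorem gridCube_inter_subset_gridHyperplanes (hδ : 0 ≤ δ) {m m' : ι → ℤ} (hne : m ≠ m') :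
    gridCube t δ m ∩ gridCube t δ m' ⊆ gridHyperplanes t δ := by
  wlog hlt : ∃ j, m j < m' j generalizing m m'
  · obtain ⟨j, hj⟩ := Function.ne_iff.mp hne
    simp only [not_exists, not_lt] at hlt
    rw [Set.inter_comm]
    exact this hne.symm ⟨j, (hlt j).lt_of_ne' hj⟩
  obtain ⟨j, hj⟩ := hlt
  rintro x ⟨hx, hx'⟩
  refine Set.mem_iUnion₂.mpr ⟨j, m j + 1, le_antisymm ?_ ?_⟩
  · exact_mod_cast hx.2 j
  · have : ((m j + 1 : ℤ) : ℝ) * δ ≤ m' j * δ := by gcongr; exact_mod_cast hj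
    linarith [hx'.1 j]

variable [Fintype ι] {α : Type*} {L : Filter α} {μs : α → Measure (ι → ℝ)} {ν : Measure (ι → ℝ)}
  {C : Set (ι → ℝ)}

theorem limsup_measure_le_measure_cthickening [SFinite ν]
    (hrect : ∀ r s : ι → ℝ, L.limsup (fun a => μs a (Set.Icc r s)) ≤ ν (Set.Icc r s))
    (hC : IsCompact C) (hδ : 0 < δ) :
    L.limsup (fun a => μs a C) ≤ ν (Metric.cthickening δ C) := by
  classical
  obtain ⟨t, ht⟩ := exists_measure_gridHyperplanes_eq_zero ν δ
  obtain ⟨lo, hlo⟩ := hC.isBounded.bddBelow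
  obtain ⟨hi, hhi⟩ := hC.isBounded.bddAbove
  have hfin : (gridIndex t δ '' C).Finite :=
    (Set.finite_Icc _ _).subset ((monotone_gridIndex hδ.le).mapsTo_Icc.mono_left
      (fun x hx => ⟨hlo hx, hhi hx⟩)).image_subset
  set S := hfin.toFinset
  have hcover : C ⊆ ⋃ m ∈ S, gridCube t δ m := fun x hx =>
    Set.mem_biUnion (hfin.mem_toFinset.mpr (Set.mem_image_of_mem _ hx))
      (mem_gridCube_gridIndex hδ x)
  have hcubes : (⋃ m ∈ S, gridCube t δ m) ⊆ Metric.cthickening δ C := by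
    refine Set.iUnion₂_subset fun m hm z hz => ?_
    obtain ⟨y, hyC, rfl⟩ := hfin.mem_toFinset.mp hm
    exact Metric.mem_cthickening_of_dist_le z y δ C hyC
      (dist_le_of_mem_gridCube hδ.le hz (mem_gridCube_gridIndex hδ y))
  have hdisj : (S : Set (ι → ℤ)).Pairwise (Function.onFun (AEDisjoint ν) (gridCube t δ)) :=
    fun _ _ _ _ hne => measure_mono_null (gridCube_inter_subset_gridHyperplanes hδ.le hne) ht
  calc L.limsup (fun a => μs a C)
      ≤ L.limsup (∑ m ∈ S, fun a => μs a (gridCube t δ m)) := by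
        refine limsup_le_limsup (.of_forall fun a => ?_)
        rw [Finset.sum_apply]
        exact (measure_mono hcover).trans (measure_biUnion_finset_le _ _)
    _ ≤ ∑ m ∈ S, L.limsup (fun a => μs a (gridCube t δ m)) :=
        ENNReal.limsup_sum_le_sum_limsup _ _
    _ ≤ ∑ m ∈ S, ν (gridCube t δ m) := Finset.sum_le_sum fun _ _ => hrect _ _
    _ = ν (⋃ m ∈ S, gridCube t δ m) :=
        (measure_biUnion_finset₀ hdisj fun _ _ => measurableSet_Icc.nullMeasurableSet).symm
    _ ≤ ν (Metric.cthickening δ C) := measure_mono hcubes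

theorem limsup_measure_le_measure_of_isCompact [IsFiniteMeasureOnCompacts ν]
    (hrect : ∀ r s : ι → ℝ, L.limsup (fun a => μs a (Set.Icc r s)) ≤ ν (Set.Icc r s))
    (hC : IsCompact C) :
    L.limsup (fun a => μs a C) ≤ ν C :=
  ge_of_tendsto (x := 𝓝[>] (0 : ℝ)) ((tendsto_measure_cthickening_of_isCompact hC).mono_left nhdsWithin_le_nhds)
    (eventually_nhdsWithin_of_forall fun _ hδ => limsup_measure_le_measure_cthickening hrect hC hδ)

end Grid

namespace MeasureTheory.ProbabilityMeasure

variable {X α : Type*} [MeasurableSpace X] {μs : α → ProbabilityMeasure X}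

theorem isTightMeasureSet_range_of_forall_measureReal_ge [TopologicalSpace X] [T2Space X]
    [OpensMeasurableSpace X]
    (h : ∀ ε : ℝ, 0 < ε → ∃ C, IsCompact C ∧ ∀ a, 1 - ε ≤ (μs a : Measure X).real C) :
    IsTightMeasureSet (Set.range (toMeasure ∘ μs)) := by
  rw [isTightMeasureSet_iff_exists_isCompact_measure_compl_le]
  intro ε hε
  obtain ⟨r, -, hr, hrε⟩ := ENNReal.lt_iff_exists_real_btwn.mp hε
  obtain ⟨C, hC, hCr⟩ := h r (ENNReal.ofReal_pos.mp hr)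
  refine ⟨C, hC, Set.forall_mem_range.mpr fun a => ?_⟩
  rw [Function.comp_apply, ← ofReal_measureReal, probReal_compl_eq_one_sub hC.measurableSet]
  exact (ENNReal.ofReal_le_ofReal (by linarith [hCr a])).trans hrε.le

theorem limsup_le_of_limsup_toMeasure_le {L : Filter α} {μ : ProbabilityMeasure X} {s : Set X}
    (h : L.limsup (fun a => (μs a : Measure X) s) ≤ (μ : Measure X) s) :
    L.limsup (fun a => μs a s) ≤ μ s := by
  rw [← ENNReal.coe_le_coe,
    ENNReal.ofNNReal_limsup (isBoundedUnder_of_eventually_le (a := 1) (by simp))]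
  simpa [ennreal_coeFn_eq_coeFn_toMeasure] using h

end MeasureTheory.ProbabilityMeasure

/-- If the random vectors `V a` (indexed by `a → ∞`) are tight and
`limsup_{a→∞} P(V_a ∈ K) ≤ P(V ∈ K)` for every compact rectangle
`K = [r 1, s 1] × … × [r k, s k]`, then `V a` converges in distribution to `V`. -/
theorem statement19
    {Ω : Type*} [MeasureSpace Ω] [IsProbabilityMeasure (ℙ : Measure Ω)]
    {k : ℕ} (V : ℝ → Ω → (Fin k → ℝ)) (Vlim : Ω → (Fin k → ℝ))
    (hVmeas : ∀ a, Measurable (V a)) (hVlimmeas : Measurable Vlim)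
    (htight : ∀ ε : ℝ, 0 < ε → ∃ C : Set (Fin k → ℝ), IsCompact C ∧
      ∀ a : ℝ, 1 - ε ≤ (ℙ {ω | V a ω ∈ C}).toReal)
    (hlimsup : ∀ r s : Fin k → ℝ,
      Filter.limsup (fun a : ℝ => (ℙ {ω | V a ω ∈ Set.Icc r s}).toReal) atTop ≤
        (ℙ {ω | Vlim ω ∈ Set.Icc r s}).toReal) :
    ∀ f : BoundedContinuousFunction (Fin k → ℝ) ℝ,
      Tendsto (fun a : ℝ => ∫ ω, f (V a ω) ∂ℙ) atTop (nhds (∫ ω, f (Vlim ω) ∂ℙ)) := by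
  intro f
  let μs : ℝ → ProbabilityMeasure (Fin k → ℝ) := fun a =>
    ⟨Measure.map (V a) ℙ, Measure.isProbabilityMeasure_map (hVmeas a).aemeasurable⟩
  let μ : ProbabilityMeasure (Fin k → ℝ) :=
    ⟨Measure.map Vlim ℙ, Measure.isProbabilityMeasure_map hVlimmeas.aemeasurable⟩
  have hrect (r s : Fin k → ℝ) :
      atTop.limsup (fun a => (μs a : Measure _) (Set.Icc r s)) ≤ (μ : Measure _) (Set.Icc r s) := by
    refine ENNReal.limsup_le_of_limsup_toReal_le ENNReal.one_ne_top
      (.of_forall fun _ => prob_le_one) (measure_ne_top _ _) ?_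
    simp only [μs, μ, ProbabilityMeasure.coe_mk, Measure.map_apply (hVmeas _) measurableSet_Icc,
      Measure.map_apply hVlimmeas measurableSet_Icc]
    exact hlimsup r s
  have hμs_tight : IsTightMeasureSet (Set.range (ProbabilityMeasure.toMeasure ∘ μs)) :=
    ProbabilityMeasure.isTightMeasureSet_range_of_forall_measureReal_ge fun ε hε =>
      (htight ε hε).imp fun C ⟨hC, hCε⟩ => ⟨hC, fun a => by
        rw [ProbabilityMeasure.coe_mk, map_measureReal_apply (hVmeas a) hC.measurableSet]
        exact hCε a⟩
  have hconv : Tendsto μs atTop (𝓝 μ) :=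
    tendsto_of_forall_isCompact_of_isTightMeasureSet hμs_tight fun C hC =>
      ProbabilityMeasure.limsup_le_of_limsup_toMeasure_le
        (limsup_measure_le_measure_of_isCompact hrect hC)
  convert ProbabilityMeasure.tendsto_iff_forall_integral_tendsto.mp hconv f using 3 <;>
    exact (integral_map (by fun_prop) f.continuous.aestronglyMeasurable).symm
end
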